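/- arXiv:1002.0205 — 3 statements merged into one kernel-verified Lean document; each statement's English description precedes it below -/
import Mathlib

section
/- Let E be a number field and let F/E and K/E be two cyclic (finite Galois with cyclic Galois group) extensions inside a common algebraic closure, of degrees n₁ and n₂ respectively, with gcd(n₁, n₂) = 1. If γ ∈ E* is a non-norm element of both F/E and K/E, then the compositum FK/E is a cyclic extension of degree n₁n₂ and γ is a non-norm element of FK/E. -/
open NumberField IntermediateField

noncomputable def normSubgroup (E F : Type*) [Field E] [Field F] [Algebra E F] : Subgroup Eˣ :=
  MonoidHom.range (Units.map (Algebra.norm E : F →* E))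

/-- `γ ∈ E*` is a non-norm element of `F/E` if its order in `Eˣ/N_{F/E}(Fˣ)` equals `[F:E]`. -/
noncomputable def IsNonNormElement (E F : Type*) [Field E] [Field F] [Algebra E F] (γ : E) : Prop :=
  ∃ hγ : γ ≠ 0,
    orderOf (QuotientGroup.mk (s := normSubgroup E F) (Units.mk0 γ hγ)) = Module.finrank E F

/-!
Restriction embeds `Gal(FK/E)` into `Gal(F/E) × Gal(K/E)`, a cyclic group when the degrees are
coprime, so `FK/E` is cyclic. Norms from `FK` are norms from `F` and from `K`, so the order of `γ`
modulo `N(FK)` is divisible by `n₁` and `n₂`, hence by `n₁ n₂`; it also divides `[FK : E] = n₁ n₂`,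
since `γ ^ [FK : E] = N(γ)`.
-/

theorem orderOf_mk_dvd_orderOf_mk_of_le {G : Type*} [Group G] {N M : Subgroup G} [N.Normal]
    [M.Normal] (h : N ≤ M) (g : G) : orderOf (g : G ⧸ M) ∣ orderOf (g : G ⧸ N) :=
  orderOf_map_dvd (QuotientGroup.map N M (MonoidHom.id G) h) g

section NormSubgroup

variable {E : Type*} [Field E]

theorem pow_finrank_mem_normSubgroup (F : Type*) [Field F] [Algebra E F] (u : Eˣ) :
    u ^ Module.finrank E F ∈ normSubgroup E F :=
  ⟨Units.map (algebraMap E F : E →* F) u, Units.ext <| Algebra.norm_algebraMap (u : E)⟩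

theorem orderOf_mk_normSubgroup_dvd_finrank (F : Type*) [Field F] [Algebra E F] (u : Eˣ) :
    orderOf (u : Eˣ ⧸ normSubgroup E F) ∣ Module.finrank E F :=
  orderOf_dvd_of_pow_eq_one <| (QuotientGroup.eq_one_iff _).2 (pow_finrank_mem_normSubgroup F u)

theorem normSubgroup_anti {Ω : Type*} [Field Ω] [Algebra E Ω] {F L : IntermediateField E Ω}
    (h : F ≤ L) : normSubgroup E L ≤ normSubgroup E F := by
  let _ : Algebra F L := (inclusion h).toAlgebra
  have : IsScalarTower E F L := .of_algebraMap_eq fun _ => rfl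
  rintro _ ⟨u, rfl⟩
  exact ⟨Units.map (Algebra.norm F : L →* F) u, Units.ext Algebra.norm_norm⟩

theorem IsNonNormElement.sup_of_coprime {Ω : Type*} [Field Ω] [Algebra E Ω]
    {F K L : IntermediateField E Ω} (hF : F ≤ L) (hK : K ≤ L)
    (hcop : (Module.finrank E F).Coprime (Module.finrank E K))
    (hL : Module.finrank E L = Module.finrank E F * Module.finrank E K) {γ : E}
    (hγF : IsNonNormElement E F γ) (hγK : IsNonNormElement E K γ) :
    IsNonNormElement E L γ := by
  obtain ⟨hγ, hordF⟩ := hγF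
  obtain ⟨_, hordK⟩ := hγK
  refine ⟨hγ, Nat.dvd_antisymm (orderOf_mk_normSubgroup_dvd_finrank L _) ?_⟩
  rw [hL]
  refine hcop.mul_dvd_of_dvd_of_dvd ?_ ?_
  · exact hordF ▸ orderOf_mk_dvd_orderOf_mk_of_le (normSubgroup_anti hF) _
  · exact hordK ▸ orderOf_mk_dvd_orderOf_mk_of_le (normSubgroup_anti hK) _

end NormSubgroup

section GaloisGroup

variable {E : Type*} [Field E]

theorem AlgEquiv.restrictNormalHom_prod_injective {L : Type*} [Field L] [Algebra E L]
    {A B : IntermediateField E L} [Normal E A] [Normal E B] (h : A ⊔ B = ⊤) :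
    Function.Injective ((AlgEquiv.restrictNormalHom (F := E) (K₁ := L) A).prod
      (AlgEquiv.restrictNormalHom (F := E) (K₁ := L) B)) := by
  rw [← MonoidHom.ker_eq_bot_iff, eq_bot_iff]
  intro σ hσ
  have hA : σ ∈ A.fixingSubgroup := by
    rw [← A.restrictNormalHom_ker]; exact congrArg Prod.fst hσ
  have hB : σ ∈ B.fixingSubgroup := by
    rw [← B.restrictNormalHom_ker]; exact congrArg Prod.snd hσ
  have : σ ∈ (A ⊔ B).fixingSubgroup := by
    rw [fixingSubgroup_sup]; exact ⟨hA, hB⟩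
  rwa [h, fixingSubgroup_top] at this

theorem isCyclic_of_injective_prod {G M N : Type*} [Group G] [Group M] [Group N] [IsCyclic M]
    [IsCyclic N] (hcop : (Nat.card M).Coprime (Nat.card N)) (f : G →* M × N)
    (hf : Function.Injective f) : IsCyclic G :=
  haveI := Group.isCyclic_prod_iff.2 ⟨‹_›, ‹_›, hcop⟩
  isCyclic_of_injective f hf

theorem isCyclic_aut_sup_of_coprime {Ω : Type*} [Field Ω] [Algebra E Ω]
    (F K : IntermediateField E Ω) [FiniteDimensional E F] [FiniteDimensional E K] [IsGalois E F]
    [IsGalois E K] [IsCyclic (F ≃ₐ[E] F)] [IsCyclic (K ≃ₐ[E] K)]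
    (hcop : (Module.finrank E F).Coprime (Module.finrank E K)) :
    IsCyclic (↥(F ⊔ K) ≃ₐ[E] ↥(F ⊔ K)) := by
  let eF := AlgEquiv.autCongr (restrictAlgEquiv (le_sup_left : F ≤ F ⊔ K))
  let eK := AlgEquiv.autCongr (restrictAlgEquiv (le_sup_right : K ≤ F ⊔ K))
  have : Normal E (restrict (le_sup_left : F ≤ F ⊔ K)) := .of_algEquiv (restrictAlgEquiv _)
  have : Normal E (restrict (le_sup_right : K ≤ F ⊔ K)) := .of_algEquiv (restrictAlgEquiv _)
  have := eF.isCyclic.1 ‹_›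
  have := eK.isCyclic.1 ‹_›
  have hsup : restrict (le_sup_left : F ≤ F ⊔ K) ⊔ restrict le_sup_right = ⊤ := by
    rw [← lift_inj, lift_sup, lift_restrict, lift_restrict, lift_top]
  refine isCyclic_of_injective_prod ?_ _ (AlgEquiv.restrictNormalHom_prod_injective hsup)
  rwa [← Nat.card_congr eF.toEquiv, ← Nat.card_congr eK.toEquiv, IsGalois.card_aut_eq_finrank,
    IsGalois.card_aut_eq_finrank]

end GaloisGroup

theorem statement0_general {E Ω : Type*} [Field E] [Field Ω] [Algebra E Ω]
    (F K : IntermediateField E Ω) (n₁ n₂ : ℕ)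
    [FiniteDimensional E ↥F] [IsGalois E ↥F] (hFcyc : IsCyclic (↥F ≃ₐ[E] ↥F))
    (hFdeg : Module.finrank E ↥F = n₁)
    [FiniteDimensional E ↥K] [IsGalois E ↥K] (hKcyc : IsCyclic (↥K ≃ₐ[E] ↥K))
    (hKdeg : Module.finrank E ↥K = n₂)
    (hcop : Nat.gcd n₁ n₂ = 1)
    (γ : E) (hγF : IsNonNormElement E ↥F γ) (hγK : IsNonNormElement E ↥K γ) :
    IsGalois E ↥(F ⊔ K) ∧ IsCyclic (↥(F ⊔ K) ≃ₐ[E] ↥(F ⊔ K)) ∧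
      Module.finrank E ↥(F ⊔ K) = n₁ * n₂ ∧ IsNonNormElement E ↥(F ⊔ K) γ := by
  subst hFdeg hKdeg
  have hdeg := (LinearDisjoint.of_finrank_coprime (A := F) (L := K) hcop).finrank_sup
  exact ⟨inferInstance, isCyclic_aut_sup_of_coprime F K hcop, hdeg,
    .sup_of_coprime le_sup_left le_sup_right hcop hdeg hγF hγK⟩

theorem statement0 {E Ω : Type*} [Field E] [NumberField E] [Field Ω] [Algebra E Ω]
    [IsAlgClosure E Ω]
    (F K : IntermediateField E Ω) (n₁ n₂ : ℕ)
    [FiniteDimensional E ↥F] [IsGalois E ↥F] (hFcyc : IsCyclic (↥F ≃ₐ[E] ↥F))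
    (hFdeg : Module.finrank E ↥F = n₁)
    [FiniteDimensional E ↥K] [IsGalois E ↥K] (hKcyc : IsCyclic (↥K ≃ₐ[E] ↥K))
    (hKdeg : Module.finrank E ↥K = n₂)
    (hcop : Nat.gcd n₁ n₂ = 1)
    (γ : E) (hγF : IsNonNormElement E ↥F γ) (hγK : IsNonNormElement E ↥K γ) :
    IsGalois E ↥(F ⊔ K) ∧ IsCyclic (↥(F ⊔ K) ≃ₐ[E] ↥(F ⊔ K)) ∧
      Module.finrank E ↥(F ⊔ K) = n₁ * n₂ ∧ IsNonNormElement E ↥(F ⊔ K) γ :=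
  statement0_general F K n₁ n₂ hFcyc hFdeg hKcyc hKdeg hcop γ hγF hγK
end

section
/- Let q be a prime number, k a positive integer, and F/E a cyclic extension of number fields of degree q^k. Let 𝔭 be a nonzero prime ideal of the ring of integers O_E that is totally and tamely ramified in F/E. If γ ∈ O_E \ 𝔭 and the congruence x^q ≡ γ (mod 𝔭) has no solution x ∈ O_E, then γ is a non-norm element of F/E. -/
open NumberField IntermediateField

/-!
Total ramification makes the whole Galois group `G` of `F/E` the inertia group of `𝔓` and makes
the residue field `𝓞 F ⧸ 𝔓` equal to that of `𝔭`, so the norm of an integer `x` is congruent to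
`x ^ n` modulo `𝔓`, where `n = [F : E]`. If `γ ^ q ^ (k - 1)` were a norm `N b`, writing `b` or
`b⁻¹` as a quotient of integers with denominator prime to `𝔓` and reducing modulo `𝔓` would make
it an `n`-th power in the residue field; since the unit group of the residue field is cyclic of
order divisible by `n`, `γ` would then be a `q`-th power modulo `𝔭`.

The divisibility is where tameness enters. For a uniformizer `π`, `σ ↦ σ π / π mod 𝔓` is a
homomorphism from `G` to the residue units whose kernel acts trivially modulo `𝔓 ^ 2`. For such a
`τ ≠ 1` of order `ℓ`, the sum `∑ τ ^ j π` is fixed by `τ`, hence lies in `𝔓 ^ 2` because `𝔓` is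
ramified over the fixed field of `τ`, and it is congruent to `ℓ π` modulo `𝔓 ^ 2`; so `ℓ ∈ 𝔓`,
which is impossible when the residue characteristic does not divide `n`.
-/

theorem IsCyclic.exists_pow_eq_of_pow_eq_pow_mul {M : Type*} [CommGroup M] [Finite M] [IsCyclic M]
    {m q : ℕ} (hdvd : m * q ∣ Nat.card M) {α β : M} (h : α ^ m = β ^ (m * q)) :
    ∃ c, α = c ^ q := by
  obtain ⟨g, hg⟩ := IsCyclic.exists_monoid_generator (α := M)
  have hm : 0 < m := Nat.pos_of_ne_zero fun hm0 => by
    simp [hm0, Nat.card_pos.ne'] at hdvd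
  obtain ⟨i, hi : g ^ i = α * (β ^ q)⁻¹⟩ := hg (α * (β ^ q)⁻¹)
  have hgi : g ^ (i * m) = 1 := by
    rw [pow_mul, hi, mul_pow, inv_pow, ← pow_mul, mul_comm q m, ← h, mul_inv_cancel]
  have hNi : Nat.card M ∣ m * i := by
    rw [mul_comm, ← orderOf_eq_card_of_forall_mem_powers hg]
    exact orderOf_dvd_of_pow_eq_one hgi
  obtain ⟨j, rfl⟩ : q ∣ i := Nat.dvd_of_mul_dvd_mul_left hm (hdvd.trans hNi)
  refine ⟨g ^ j * β, ?_⟩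
  rw [mul_pow, ← pow_mul, mul_comm j q, hi, inv_mul_cancel_right]

theorem exists_pow_eq_of_pow_eq_mul_pow {L : Type*} [Field L] {a c g : L} {N : ℕ} (hN : N ≠ 0)
    (hg : g ≠ 0) (hac : a ≠ 0 ∨ c ≠ 0) (h : a ^ N = g * c ^ N) : ∃ u : Lˣ, g = u ^ N := by
  have hc : c ≠ 0 := by
    rintro rfl
    rw [zero_pow hN, mul_zero, pow_eq_zero_iff hN] at h
    exact hac.elim (· h) (· rfl)
  have ha : a ≠ 0 := by
    rintro rfl
    rw [zero_pow hN] at h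
    exact mul_ne_zero hg (pow_ne_zero N hc) h.symm
  refine ⟨Units.mk0 (a / c) (div_ne_zero ha hc), ?_⟩
  rw [Units.val_mk0, div_pow, eq_div_iff (pow_ne_zero N hc), h]

section NormSubgroup

variable {E F : Type*} [Field E] [Field F] [Algebra E F] [FiniteDimensional E F]

theorem mk_mk0_pow_eq_one_iff_exists_norm_eq {γ : E} (hγ : γ ≠ 0) (n : ℕ) :
    (QuotientGroup.mk (s := normSubgroup E F) (Units.mk0 γ hγ)) ^ n = 1 ↔
      ∃ b : F, Algebra.norm E b = γ ^ n := by
  rw [← QuotientGroup.mk_pow, QuotientGroup.eq_one_iff]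
  constructor
  · rintro ⟨u, hu⟩
    exact ⟨u, by simpa using congrArg Units.val hu⟩
  · rintro ⟨b, hb⟩
    have hb0 : b ≠ 0 := by
      rintro rfl
      rw [Algebra.norm_zero] at hb
      exact pow_ne_zero n hγ hb.symm
    exact ⟨Units.mk0 b hb0, Units.ext (by simpa using hb)⟩

theorem isNonNormElement_of_forall_norm_ne {q k : ℕ} (hq : q.Prime) (hk : 0 < k)
    (hdeg : Module.finrank E F = q ^ k) {γ : E} (hγ : γ ≠ 0)
    (h : ∀ b : F, Algebra.norm E b ≠ γ ^ q ^ (k - 1)) : IsNonNormElement E F γ := by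
  have := Fact.mk hq
  obtain ⟨k, rfl⟩ : ∃ k', k = k' + 1 := ⟨k - 1, by omega⟩
  refine ⟨hγ, hdeg ▸ orderOf_eq_prime_pow ?_ ?_⟩
  · simpa [mk_mk0_pow_eq_one_iff_exists_norm_eq] using h
  · exact (mk_mk0_pow_eq_one_iff_exists_norm_eq hγ _).mpr
      ⟨algebraMap E F γ, by rw [Algebra.norm_algebraMap, hdeg]⟩

end NormSubgroup

section DedekindDomain

open IsDedekindDomain Ideal

variable {B : Type*} [CommRing B] [IsDedekindDomain B] {P : Ideal B} {π : B}

theorem Ideal.mem_pow_of_mul_mem_pow_of_notMem [P.IsPrime] (hP : P ≠ ⊥) {a x : B} {n : ℕ}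
    (ha : a ∉ P) (h : a * x ∈ P ^ n) : x ∈ P ^ n := by
  let v : HeightOneSpectrum B := ⟨P, inferInstance, hP⟩
  have hva : v.intValuation a = 1 := (v.intValuation_eq_one_iff_mem_primeCompl a).mpr ha
  rw [← v.intValuation_le_pow_iff_mem] at h ⊢
  rwa [map_mul, hva, one_mul] at h

theorem Ideal.exists_mem_notMem_pow_two [P.IsPrime] (hP : P ≠ ⊥) : ∃ π ∈ P, π ∉ P ^ 2 := by
  simpa using SetLike.exists_of_lt (Ideal.pow_succ_lt_pow hP 1)

theorem Ideal.span_singleton_sup_pow_two [P.IsMaximal] (hπ : π ∈ P) (hπ2 : π ∉ P ^ 2) :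
    span {π} ⊔ P ^ 2 = P := by
  obtain ⟨J, hJ⟩ : P ∣ span {π} := dvd_span_singleton.mpr hπ
  have hJP : ¬ J ≤ P := fun hle => hπ2 <| by
    rw [← span_singleton_le_iff_mem, hJ, pow_two]
    exact mul_mono_right hle
  have hPJ : P ⊔ J = ⊤ := by
    by_contra h
    exact hJP ((‹P.IsMaximal›.eq_of_le h le_sup_left).symm ▸ le_sup_right)
  rw [hJ, pow_two, ← mul_sup, sup_comm, hPJ, mul_top]

theorem Ideal.exists_sub_mul_mem_pow_two [P.IsMaximal] (hπ : π ∈ P) (hπ2 : π ∉ P ^ 2)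
    {y : B} (hy : y ∈ P) : ∃ c, y - c * π ∈ P ^ 2 := by
  rw [← span_singleton_sup_pow_two hπ hπ2, Submodule.mem_sup] at hy
  obtain ⟨_, ha, z, hz, rfl⟩ := hy
  obtain ⟨c, rfl⟩ := mem_span_singleton'.mp ha
  exact ⟨c, by simpa using hz⟩

end DedekindDomain

section GroupAction

open Pointwise Ideal

variable {B G : Type*} [CommRing B] [Group G] [MulSemiringAction G B] {P : Ideal B}

theorem Ideal.smul_mem_of_mem_inertia {σ : G} (hσ : σ ∈ P.inertia G) {x : B} (hx : x ∈ P) :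
    σ • x ∈ P := by
  simpa using add_mem (hσ x) hx

theorem Ideal.smul_mem_pow_of_mem_inertia {σ : G} (hσ : σ ∈ P.inertia G) {x : B} {n : ℕ}
    (hx : x ∈ P ^ n) : σ • x ∈ P ^ n := by
  have h : σ • P ^ n = P ^ n := by
    rw [smul_pow', MulAction.mem_stabilizer_iff.mp (inertia_le_stabilizer P hσ)]
  exact h ▸ smul_mem_pointwise_smul σ x _ hx

theorem Ideal.Quotient.mk_prod_smul [Fintype G] (hG : ∀ σ : G, σ ∈ P.inertia G) (x : B) :
    Ideal.Quotient.mk P (∏ σ : G, σ • x) = Ideal.Quotient.mk P x ^ Fintype.card G := by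
  rw [map_prod, ← Finset.card_univ, ← Finset.prod_const]
  exact Finset.prod_congr rfl fun σ _ => Ideal.Quotient.eq.mpr (hG σ x)

theorem Ideal.mul_smul_sub_mul_mem_pow_two {π : B} (hπ : π ∈ P) {σ τ : G}
    (hσ : σ ∈ P.inertia G) {a b : B} (ha : σ • π - a * π ∈ P ^ 2) (hb : τ • π - b * π ∈ P ^ 2) :
    (σ * τ) • π - (a * b) * π ∈ P ^ 2 := by
  have key : (σ * τ) • π - (a * b) * π =
      σ • (τ • π - b * π) + (σ • b - b) * σ • π + b * (σ • π - a * π) := by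
    rw [mul_smul, smul_sub, smul_mul']; ring
  rw [key]
  refine add_mem (add_mem (smul_mem_pow_of_mem_inertia hσ hb) ?_) (mul_mem_left _ _ ha)
  exact pow_two P ▸ mul_mem_mul (hσ b) (smul_mem_of_mem_inertia hσ hπ)

end GroupAction

section TameCharacter

open Ideal

variable {B G : Type*} [CommRing B] [IsDedekindDomain B] [Group G] [MulSemiringAction G B]
  {P : Ideal B} {π : B}

theorem Ideal.sub_mem_of_smul_sub_mul_mem [P.IsPrime] (hP : P ≠ ⊥) (hπ2 : π ∉ P ^ 2) {σ : G}
    {a b : B} (ha : σ • π - a * π ∈ P ^ 2) (hb : σ • π - b * π ∈ P ^ 2) : a - b ∈ P := by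
  by_contra h
  refine hπ2 (mem_pow_of_mul_mem_pow_of_notMem hP h ?_)
  simpa [sub_mul] using sub_mem hb ha

theorem Ideal.exists_smul_sub_mul_mem_pow_two [P.IsMaximal] (hπ : π ∈ P) (hπ2 : π ∉ P ^ 2)
    {σ : G} (hσ : σ ∈ P.inertia G) : ∃ c, σ • π - c * π ∈ P ^ 2 :=
  exists_sub_mul_mem_pow_two hπ hπ2 (smul_mem_of_mem_inertia hσ hπ)

/-- The tame character `σ ↦ σ π / π mod P`. -/
noncomputable def Ideal.tameCharacter [P.IsMaximal] (hP : P ≠ ⊥) (hπ : π ∈ P)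
    (hπ2 : π ∉ P ^ 2) (hG : ∀ σ : G, σ ∈ P.inertia G) : G →* B ⧸ P where
  toFun σ := Ideal.Quotient.mk P (exists_smul_sub_mul_mem_pow_two hπ hπ2 (hG σ)).choose
  map_one' := by
    rw [← map_one (Ideal.Quotient.mk P), Ideal.Quotient.eq]
    exact sub_mem_of_smul_sub_mul_mem hP hπ2
      (exists_smul_sub_mul_mem_pow_two hπ hπ2 (hG 1)).choose_spec (by simp)
  map_mul' σ τ := by
    rw [← map_mul, Ideal.Quotient.eq]
    exact sub_mem_of_smul_sub_mul_mem hP hπ2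
      (exists_smul_sub_mul_mem_pow_two hπ hπ2 (hG (σ * τ))).choose_spec
      (mul_smul_sub_mul_mem_pow_two hπ (hG σ)
        (exists_smul_sub_mul_mem_pow_two hπ hπ2 (hG σ)).choose_spec
        (exists_smul_sub_mul_mem_pow_two hπ hπ2 (hG τ)).choose_spec)

theorem Ideal.smul_sub_mem_pow_two_of_tameCharacter_eq_one [P.IsMaximal] (hP : P ≠ ⊥)
    (hπ : π ∈ P) (hπ2 : π ∉ P ^ 2) (hG : ∀ σ : G, σ ∈ P.inertia G) {σ : G}
    (h : tameCharacter hP hπ hπ2 hG σ = 1) : σ • π - π ∈ P ^ 2 := by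
  obtain ⟨c, hc, h1⟩ : ∃ c, σ • π - c * π ∈ P ^ 2 ∧ c - 1 ∈ P :=
    ⟨_, (exists_smul_sub_mul_mem_pow_two hπ hπ2 (hG σ)).choose_spec,
      Ideal.Quotient.eq.mp (h.trans (map_one _).symm)⟩
  have key : σ • π - π = (σ • π - c * π) + (c - 1) * π := by ring
  rw [key]
  exact add_mem hc (pow_two P ▸ mul_mem_mul h1 hπ)

theorem Ideal.mem_inertia_pow_two_of_smul_sub_mem [P.IsMaximal] (hπ : π ∈ P) (hπ2 : π ∉ P ^ 2)
    (hres : ∀ x : B, ∃ r, (∀ σ : G, σ • r = r) ∧ x - r ∈ P) {σ : G} (hσ : σ ∈ P.inertia G)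
    (hσπ : σ • π - π ∈ P ^ 2) : σ ∈ (P ^ 2).inertia G := by
  intro x
  obtain ⟨r, hr, hxr⟩ := hres x
  obtain ⟨c, hc⟩ := exists_sub_mul_mem_pow_two hπ hπ2 hxr
  have key : σ • x - x = (σ • c - c) * σ • π + c * (σ • π - π)
      + (σ • (x - r - c * π) - (x - r - c * π)) := by
    rw [smul_sub, smul_sub, smul_mul', hr σ]; ring
  rw [key]
  refine add_mem (add_mem ?_ (mul_mem_left _ _ hσπ))
    (sub_mem (smul_mem_pow_of_mem_inertia hσ hc) hc)
  exact pow_two P ▸ mul_mem_mul (hσ c) (smul_mem_of_mem_inertia hσ hπ)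

theorem Ideal.card_dvd_card_units_quotient [P.IsMaximal] (hP : P ≠ ⊥)
    (hG : ∀ σ : G, σ ∈ P.inertia G) (hres : ∀ x : B, ∃ r, (∀ σ : G, σ • r = r) ∧ x - r ∈ P)
    (hwild : (P ^ 2).inertia G = ⊥) : Nat.card G ∣ Nat.card (B ⧸ P)ˣ := by
  obtain ⟨π, hπ, hπ2⟩ := exists_mem_notMem_pow_two hP
  refine Subgroup.card_dvd_of_injective (tameCharacter hP hπ hπ2 hG).toHomUnits ?_
  rw [← MonoidHom.ker_eq_bot_iff, Subgroup.eq_bot_iff_forall]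
  intro σ hσ
  have h1 : tameCharacter hP hπ hπ2 hG σ = 1 := congrArg Units.val hσ
  have h2 := mem_inertia_pow_two_of_smul_sub_mem hπ hπ2 hres (hG σ)
    (smul_sub_mem_pow_two_of_tameCharacter_eq_one hP hπ hπ2 hG h1)
  simpa [hwild] using h2

theorem Ideal.natCast_mem_of_pow_eq_one [P.IsPrime] (hP : P ≠ ⊥) (hπ : π ∈ P) (hπ2 : π ∉ P ^ 2)
    {τ : G} (hτ : τ ∈ (P ^ 2).inertia G) {ℓ : ℕ} (hℓ : τ ^ ℓ = 1)
    (hfix : ∀ y ∈ P, τ • y = y → y ∈ P ^ 2) : (ℓ : B) ∈ P := by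
  set y := ∑ j ∈ Finset.range ℓ, τ ^ j • π
  have hτj (j : ℕ) : τ ^ j • π - π ∈ P ^ 2 := Subgroup.pow_mem _ hτ j π
  have hτy : τ • y = y := by
    have h := Finset.sum_range_succ' (fun j => τ ^ j • π) ℓ
    rw [Finset.sum_range_succ, hℓ, pow_zero, add_left_inj] at h
    simp_rw [y, Finset.smul_sum, smul_smul, ← pow_succ', h]
  have hyP : y ∈ P := Ideal.sum_mem _ fun j _ => by
    simpa using add_mem (pow_le_self two_ne_zero (hτj j)) hπ
  have hyℓ : y - ℓ * π ∈ P ^ 2 := by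
    have : y - ℓ * π = ∑ j ∈ Finset.range ℓ, (τ ^ j • π - π) := by
      simp [y, Finset.sum_sub_distrib, nsmul_eq_mul]
    exact this ▸ Ideal.sum_mem _ fun j _ => hτj j
  by_contra h
  refine hπ2 (mem_pow_of_mul_mem_pow_of_notMem hP h ?_)
  simpa using sub_mem (hfix y hyP hτy) hyℓ

theorem Ideal.inertia_pow_two_eq_bot [P.IsPrime] (hP : P ≠ ⊥) (hcard : (Nat.card G : B) ∉ P)
    (hfix : ∀ τ : G, τ ≠ 1 → ∀ y ∈ P, τ • y = y → y ∈ P ^ 2) : (P ^ 2).inertia G = ⊥ := by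
  obtain ⟨π, hπ, hπ2⟩ := exists_mem_notMem_pow_two hP
  refine (Subgroup.eq_bot_iff_forall _).mpr fun τ hτ => ?_
  by_contra hτ1
  have hord := natCast_mem_of_pow_eq_one hP hπ hπ2 hτ (pow_orderOf_eq_one τ) (hfix τ hτ1)
  obtain ⟨m, hm⟩ := orderOf_dvd_natCard τ
  exact hcard (by rw [hm, Nat.cast_mul]; exact mul_mem_right _ _ hord)

end TameCharacter

theorem NumberField.RingOfIntegers.norm_eq_mul_norm_of_mul_eq {E F : Type*} [Field E] [Field F]
    [Algebra E F] {b : F} {g : 𝓞 E} (hb : Algebra.norm E b = g) {s t : 𝓞 F} (h : b * t = s) :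
    RingOfIntegers.norm E s = g * RingOfIntegers.norm E t := by
  ext
  simp [← h, hb]

section NumberField

open Ideal

variable {E F : Type*} [Field E] [NumberField E] [Field F] [NumberField F] [Algebra E F]
  [IsGalois E F] {𝔓 : Ideal (𝓞 F)}

theorem NumberField.RingOfIntegers.algebraMap_norm_eq_prod_smul (x : 𝓞 F) :
    algebraMap (𝓞 E) (𝓞 F) (RingOfIntegers.norm E x) = ∏ σ : Gal(F/E), σ • x := by
  ext
  simp only [RingOfIntegers.coe_algebraMap_norm, Algebra.norm_eq_prod_automorphisms, map_prod]
  rfl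

theorem Ideal.quotient_mk_algebraMap_norm (hI : 𝔓.inertia Gal(F/E) = ⊤) (x : 𝓞 F) :
    Ideal.Quotient.mk 𝔓 (algebraMap (𝓞 E) (𝓞 F) (RingOfIntegers.norm E x)) =
      Ideal.Quotient.mk 𝔓 x ^ Module.finrank E F := by
  rw [RingOfIntegers.algebraMap_norm_eq_prod_smul, Quotient.mk_prod_smul (fun σ => hI ▸ trivial),
    ← IsGalois.card_aut_eq_finrank, Nat.card_eq_fintype_card]

attribute [local instance] Ideal.Quotient.field in
theorem Ideal.exists_pow_eq_of_norm_eq [𝔓.IsMaximal] (h𝔓 : 𝔓 ≠ ⊥)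
    (hI : 𝔓.inertia Gal(F/E) = ⊤) {g : 𝓞 E} (hg : algebraMap (𝓞 E) (𝓞 F) g ∉ 𝔓) {b : F}
    (hb : Algebra.norm E b = g) :
    ∃ u : (𝓞 F ⧸ 𝔓)ˣ, Ideal.Quotient.mk 𝔓 (algebraMap (𝓞 E) (𝓞 F) g) = u ^ Module.finrank E F := by
  have hN : Module.finrank E F ≠ 0 := Module.finrank_pos.ne'
  have hg0 : Ideal.Quotient.mk 𝔓 (algebraMap (𝓞 E) (𝓞 F) g) ≠ 0 := by
    rwa [Ne, Ideal.Quotient.eq_zero_iff_mem]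
  have hred {s t : 𝓞 F} (h : b * t = s) :
      Ideal.Quotient.mk 𝔓 s ^ Module.finrank E F =
        Ideal.Quotient.mk 𝔓 (algebraMap (𝓞 E) (𝓞 F) g) *
          Ideal.Quotient.mk 𝔓 t ^ Module.finrank E F := by
    rw [← quotient_mk_algebraMap_norm hI, ← quotient_mk_algebraMap_norm hI, ← map_mul, ← map_mul,
      RingOfIntegers.norm_eq_mul_norm_of_mul_eq hb h]
  let v : IsDedekindDomain.HeightOneSpectrum (𝓞 F) := ⟨𝔓, inferInstance, h𝔓⟩
  have ht (t : v.asIdeal.primeCompl) : Ideal.Quotient.mk 𝔓 t ≠ 0 := by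
    rw [Ne, Ideal.Quotient.eq_zero_iff_mem]
    exact t.2
  obtain ⟨s, t, h | h⟩ := v.exists_primeCompl_mul_eq_or_mul_eq b
  · exact exists_pow_eq_of_pow_eq_mul_pow hN hg0 (Or.inr (ht t)) (hred h)
  · exact exists_pow_eq_of_pow_eq_mul_pow hN hg0 (Or.inl (ht t)) (hred h)

variable [𝔓.IsPrime]

theorem Ideal.mem_pow_card_of_forall_smul_eq (h𝔓 : 𝔓 ≠ ⊥) {H : Subgroup Gal(F/E)}
    (hH : H ≤ 𝔓.inertia Gal(F/E)) {y : 𝓞 F} (hy : y ∈ 𝔓) (hfix : ∀ τ ∈ H, τ • y = y) :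
    y ∈ 𝔓 ^ Nat.card H := by
  let K : IntermediateField E F := FixedPoints.intermediateField H
  have : IsGaloisGroup H (𝓞 K) (𝓞 F) := .of_isFractionRing H (𝓞 K) (𝓞 F) K F
  obtain ⟨a, rfl⟩ :=
    IsGaloisGroup.isInvariant.isInvariant (G := H) (A := 𝓞 K) y fun τ => hfix τ τ.2
  have hIH : 𝔓.inertia H = ⊤ := eq_top_iff.mpr fun τ _ => coe_mem_inertia.mp (hH τ.2)
  have he : Nat.card H = (𝔓.under (𝓞 K)).ramificationIdx' 𝔓 := by
    rw [← Subgroup.card_top, ← hIH, card_inertia_eq_ramificationIdxIn (𝔓.under (𝓞 K)) 𝔓,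
      ramificationIdxIn_eq_ramificationIdx _ 𝔓 H,
      ramificationIdx'_eq_ramificationIdx _ _ (under_ne_bot (𝓞 K) h𝔓)]
  rw [he]
  exact le_pow_ramificationIdx' (mem_map_of_mem _ (mem_comap.mpr hy))

theorem Ideal.mem_pow_two_of_smul_eq (h𝔓 : 𝔓 ≠ ⊥) {τ : Gal(F/E)} (hτ : τ ∈ 𝔓.inertia Gal(F/E))
    (hτ1 : τ ≠ 1) {y : 𝓞 F} (hy : y ∈ 𝔓) (hτy : τ • y = y) : y ∈ 𝔓 ^ 2 := by
  have hfix : Subgroup.zpowers τ ≤ MulAction.stabilizer Gal(F/E) y :=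
    Subgroup.zpowers_le.mpr hτy
  have h := mem_pow_card_of_forall_smul_eq h𝔓 (Subgroup.zpowers_le.mpr hτ) hy fun σ hσ => hfix hσ
  rw [Nat.card_zpowers] at h
  refine pow_le_pow_right ?_ h
  have := orderOf_pos τ
  have : orderOf τ ≠ 1 := fun h1 => hτ1 (orderOf_eq_one_iff.mp h1)
  omega

theorem Ideal.inertia_eq_top_of_ramificationIdx_eq
    (he : 𝔓.ramificationIdx (𝓞 E) = Module.finrank E F) : 𝔓.inertia Gal(F/E) = ⊤ := by
  have : IsGaloisGroup Gal(F/E) (𝓞 E) (𝓞 F) := .of_isFractionRing _ _ _ E F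
  refine Subgroup.eq_top_of_card_eq _ ?_
  rw [card_inertia_eq_ramificationIdxIn (𝔓.under (𝓞 E)) 𝔓,
    ramificationIdxIn_eq_ramificationIdx _ 𝔓 Gal(F/E), he,
    IsGaloisGroup.card_eq_finrank Gal(F/E) E F]

theorem Ideal.inertiaDeg_eq_one_of_ramificationIdx_eq
    (he : 𝔓.ramificationIdx (𝓞 E) = Module.finrank E F) : 𝔓.inertiaDeg (𝓞 E) = 1 := by
  have : IsGaloisGroup Gal(F/E) (𝓞 E) (𝓞 F) := .of_isFractionRing _ _ _ E F
  have h := ncard_primesOver_mul_ramificationIdxIn_mul_inertiaDegIn (𝔓.under (𝓞 E)) (𝓞 F) Gal(F/E)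
  rw [ramificationIdxIn_eq_ramificationIdx _ 𝔓 Gal(F/E), inertiaDegIn_eq_inertiaDeg _ 𝔓 Gal(F/E),
    he, IsGaloisGroup.card_eq_finrank Gal(F/E) E F, mul_left_comm] at h
  exact Nat.eq_one_of_mul_eq_one_left (Nat.eq_of_mul_eq_mul_left Module.finrank_pos
    (h.trans (mul_one _).symm))

attribute [local instance] Ideal.Quotient.field in
theorem Ideal.surjective_quotient_mk_algebraMap_of_ramificationIdx_eq [𝔓.IsMaximal]
    (he : 𝔓.ramificationIdx (𝓞 E) = Module.finrank E F) :
    Function.Surjective fun r : 𝓞 E => Ideal.Quotient.mk 𝔓 (algebraMap (𝓞 E) (𝓞 F) r) := by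
  have h := inertiaDeg_eq_one_of_ramificationIdx_eq he
  rw [inertiaDeg_eq_of_isMaximal (𝔓.under (𝓞 E)) 𝔓] at h
  exact ((Algebra.finrank_eq_one_iff_bijective_algebraMap.mp h).2.comp
    Ideal.Quotient.mk_surjective :)

theorem Ideal.finrank_dvd_card_units_quotient [𝔓.IsMaximal] (h𝔓 : 𝔓 ≠ ⊥)
    (he : 𝔓.ramificationIdx (𝓞 E) = Module.finrank E F)
    (htame : (Module.finrank E F : 𝓞 F) ∉ 𝔓) : Module.finrank E F ∣ Nat.card (𝓞 F ⧸ 𝔓)ˣ := by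
  have hI := inertia_eq_top_of_ramificationIdx_eq he
  have hG (σ : Gal(F/E)) : σ ∈ 𝔓.inertia Gal(F/E) := hI ▸ Subgroup.mem_top σ
  have hres (x : 𝓞 F) : ∃ r, (∀ σ : Gal(F/E), σ • r = r) ∧ x - r ∈ 𝔓 := by
    obtain ⟨r, hr⟩ := surjective_quotient_mk_algebraMap_of_ramificationIdx_eq he
      (Ideal.Quotient.mk 𝔓 x)
    exact ⟨_, fun σ => smul_algebraMap σ r, Ideal.Quotient.eq.mp hr.symm⟩
  have hwild : (𝔓 ^ 2).inertia Gal(F/E) = ⊥ := by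
    refine inertia_pow_two_eq_bot h𝔓 ?_ fun τ hτ1 y hy hτy =>
      mem_pow_two_of_smul_eq h𝔓 (hG τ) hτ1 hy hτy
    rwa [IsGalois.card_aut_eq_finrank]
  rw [← IsGalois.card_aut_eq_finrank]
  exact card_dvd_card_units_quotient h𝔓 hG hres hwild

theorem Ideal.exists_pow_sub_mem_of_norm_eq_pow [𝔓.IsMaximal] (h𝔓 : 𝔓 ≠ ⊥)
    (he : 𝔓.ramificationIdx (𝓞 E) = Module.finrank E F)
    (htame : (Module.finrank E F : 𝓞 F) ∉ 𝔓) {m q : ℕ} (hmq : Module.finrank E F = m * q)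
    {g : 𝓞 E} (hg : algebraMap (𝓞 E) (𝓞 F) g ∉ 𝔓) {b : F} (hb : Algebra.norm E b = ↑(g ^ m)) :
    ∃ r : 𝓞 E, algebraMap (𝓞 E) (𝓞 F) (r ^ q - g) ∈ 𝔓 := by
  obtain ⟨u, hu⟩ := exists_pow_eq_of_norm_eq h𝔓 (inertia_eq_top_of_ramificationIdx_eq he)
    (by rw [map_pow]; exact fun h => hg (‹𝔓.IsMaximal›.isPrime.mem_of_pow_mem _ h)) hb
  rw [map_pow, map_pow, hmq] at hu
  have hm : m ≠ 0 := fun hm0 => Module.finrank_pos.ne' (by simpa [hm0] using hmq)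
  have hα : IsUnit (Ideal.Quotient.mk 𝔓 (algebraMap (𝓞 E) (𝓞 F) g)) :=
    (isUnit_pow_iff hm).mp (by rw [hu]; exact u.isUnit.pow _)
  obtain ⟨c, hc⟩ := IsCyclic.exists_pow_eq_of_pow_eq_pow_mul
    (hmq ▸ finrank_dvd_card_units_quotient h𝔓 he htame) (α := hα.unit) (β := u)
    (Units.ext (by simpa using hu))
  obtain ⟨r, hr⟩ := surjective_quotient_mk_algebraMap_of_ramificationIdx_eq he c
  refine ⟨r, ?_⟩
  rw [← Ideal.Quotient.eq_zero_iff_mem, map_sub, map_pow, map_sub, map_pow]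
  rw [show Ideal.Quotient.mk 𝔓 (algebraMap (𝓞 E) (𝓞 F) r) = c from hr, ← Units.val_pow_eq_pow_val,
    ← hc, IsUnit.unit_spec, sub_self]

end NumberField

theorem statement1_general {E F : Type*} [Field E] [NumberField E] [Field F] [NumberField F]
    [Algebra E F] [IsGalois E F]
    (q k : ℕ) (hq : q.Prime) (hk : 0 < k)
    (hdeg : Module.finrank E F = q ^ k)
    (𝔭 : Ideal (𝓞 E)) (h𝔭ne : 𝔭 ≠ ⊥)
    -- 𝔭 is totally ramified in F/E:
    (𝔓 : Ideal (𝓞 F)) (h𝔓prime : 𝔓.IsPrime)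
    (h𝔓over : Ideal.comap (algebraMap (𝓞 E) (𝓞 F)) 𝔓 = 𝔭)
    (hram : Ideal.ramificationIdx' 𝔭 𝔓 = Module.finrank E F)
    -- and tamely: the residue characteristic does not divide the degree:
    (htame : ¬ ringChar ((𝓞 E) ⧸ 𝔭) ∣ Module.finrank E F)
    (γ : 𝓞 E) (hγ : γ ∉ 𝔭)
    (hsol : ¬ ∃ x : 𝓞 E, x ^ q - γ ∈ 𝔭) :
    IsNonNormElement E F (algebraMap (𝓞 E) E γ) := by
  have hγ𝔓 : algebraMap (𝓞 E) (𝓞 F) γ ∉ 𝔓 := by rwa [← h𝔓over] at hγ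
  have hγ0 : algebraMap (𝓞 E) E γ ≠ 0 := by
    simpa using fun h : γ = 0 => hγ (h ▸ 𝔭.zero_mem)
  refine isNonNormElement_of_forall_norm_ne hq hk hdeg hγ0 fun b hb => hsol ?_
  have h𝔓 : 𝔓 ≠ ⊥ := by
    rintro rfl
    exact h𝔭ne (h𝔓over ▸ Ideal.comap_bot_of_injective _ (FaithfulSMul.algebraMap_injective _ _))
  have := h𝔓prime.isMaximal h𝔓
  have : 𝔓.LiesOver 𝔭 := ⟨h𝔓over.symm⟩
  have he : 𝔓.ramificationIdx (𝓞 E) = Module.finrank E F := by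
    rw [← Ideal.ramificationIdx'_eq_ramificationIdx 𝔭 𝔓 h𝔭ne, hram]
  have htame' : (Module.finrank E F : 𝓞 F) ∉ 𝔓 := by
    refine fun h => htame (ringChar.dvd ?_)
    rw [← map_natCast (Ideal.Quotient.mk 𝔭), Ideal.Quotient.eq_zero_iff_mem, ← h𝔓over,
      Ideal.mem_comap, map_natCast]
    exact h
  obtain ⟨r, hr⟩ := Ideal.exists_pow_sub_mem_of_norm_eq_pow h𝔓 he htame'
    (by rw [hdeg, ← pow_succ, Nat.sub_add_cancel hk]) hγ𝔓 (b := b) (by simpa using hb)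
  exact ⟨r, by rwa [← h𝔓over, Ideal.mem_comap]⟩

theorem statement1 {E F : Type*} [Field E] [NumberField E] [Field F] [NumberField F]
    [Algebra E F] [FiniteDimensional E F] [IsGalois E F] (hcyc : IsCyclic (F ≃ₐ[E] F))
    (q k : ℕ) (hq : q.Prime) (hk : 0 < k)
    (hdeg : Module.finrank E F = q ^ k)
    (𝔭 : Ideal (𝓞 E)) (h𝔭prime : 𝔭.IsPrime) (h𝔭ne : 𝔭 ≠ ⊥)
    -- 𝔭 is totally ramified in F/E:
    (𝔓 : Ideal (𝓞 F)) (h𝔓prime : 𝔓.IsPrime)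
    (h𝔓over : Ideal.comap (algebraMap (𝓞 E) (𝓞 F)) 𝔓 = 𝔭)
    (hram : Ideal.ramificationIdx' 𝔭 𝔓 = Module.finrank E F)
    -- and tamely: the residue characteristic does not divide the degree:
    (htame : ¬ ringChar ((𝓞 E) ⧸ 𝔭) ∣ Module.finrank E F)
    (γ : 𝓞 E) (hγ : γ ∉ 𝔭)
    (hsol : ¬ ∃ x : 𝓞 E, x ^ q - γ ∈ 𝔭) :
    IsNonNormElement E F (algebraMap (𝓞 E) E γ) :=
  statement1_general q k hq hk hdeg 𝔭 h𝔭ne 𝔓 h𝔓prime h𝔓over hram htame γ hγ hsol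
end

section
/- The extension ℚ(ζ_3, i)/ℚ(i) is a cyclic extension of degree 2 and 1 + i is a non-norm element of ℚ(ζ_3, i)/ℚ(i). -/
open NumberField IntermediateField

/-- The field `ℚ(i)` as a subfield of `ℂ`. -/
noncomputable def QI : IntermediateField ℚ ℂ := ℚ⟮(Complex.I)⟯

/-- The element `1 + i` of `ℚ(i)`. -/
noncomputable def onePlusI : QI :=
  ⟨1 + Complex.I, add_mem (one_mem _) (IntermediateField.mem_adjoin_simple_self ℚ Complex.I)⟩

/-!
A norm from `ℚ(i, ζ₃)` to `ℚ(i)` is a value of the form `a² - ab + b²` with `a, b ∈ ℚ(i)`.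
Clearing denominators, `a² - ab + b² = 1 + i` becomes `A² - AB + B² = (1 + i) C²` in `ℤ[i]`.
Modulo the prime `π = 1 + i` (residue field `𝔽₂`) this forces `π ∣ A, B`, then `π ∣ C`, and
dividing by `π²` gives a solution with smaller `N(C)`: infinite descent. The same fact shows
`ζ₃ ∉ ℚ(i)`, so the extension is quadratic, hence Galois and cyclic, and `(1 + i)² = N(1 + i)`
makes the class of `1 + i` have order exactly `2`.
-/

namespace GaussianInt

/-- Reduction modulo the prime `1 + i`, whose residue field is `𝔽₂`. -/
def toZModTwo : GaussianInt →+* ZMod 2 := Zsqrtd.lift ⟨1, by decide⟩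

theorem toZModTwo_apply (x : GaussianInt) : toZModTwo x = x.re + x.im := by
  simp [toZModTwo]

theorem toZModTwo_eq_zero_iff {x : GaussianInt} : toZModTwo x = 0 ↔ ⟨1, 1⟩ ∣ x := by
  refine ⟨fun h ↦ ?_, fun ⟨y, hy⟩ ↦ by rw [hy, map_mul]; exact zero_mul _⟩
  rw [toZModTwo_apply, ← Int.cast_add, ZMod.intCast_zmod_eq_zero_iff_dvd] at h
  obtain ⟨k, hk⟩ := h
  exact ⟨⟨k, x.im - k⟩, by ext <;> simp; omega⟩

-- `X² + X + 1` has no root in `𝔽₂`, so `1 + i` divides `A` and `B`, hence also `C`.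
theorem exists_of_sq_sub_mul_add_sq_eq {A B C : GaussianInt}
    (h : A ^ 2 - A * B + B ^ 2 = ⟨1, 1⟩ * C ^ 2) :
    ∃ A' B' C' : GaussianInt,
      C = ⟨1, 1⟩ * C' ∧ A' ^ 2 - A' * B' + B' ^ 2 = ⟨1, 1⟩ * C' ^ 2 := by
  have hπ : (⟨1, 1⟩ : GaussianInt) ≠ 0 := by decide
  have hχπ : toZModTwo ⟨1, 1⟩ = 0 := by decide
  have hχ := congrArg toZModTwo h
  simp only [map_add, map_sub, map_mul, map_pow, hχπ, zero_mul] at hχ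
  obtain ⟨hA, hB⟩ : toZModTwo A = 0 ∧ toZModTwo B = 0 := by
    generalize toZModTwo A = a, toZModTwo B = b at hχ
    revert a b
    decide
  obtain ⟨A', rfl⟩ := toZModTwo_eq_zero_iff.mp hA
  obtain ⟨B', rfl⟩ := toZModTwo_eq_zero_iff.mp hB
  have hC2 : ⟨1, 1⟩ * (A' ^ 2 - A' * B' + B' ^ 2) = C ^ 2 :=
    mul_left_cancel₀ hπ (by linear_combination h)
  have hC : toZModTwo C = 0 := by
    have hχC := congrArg toZModTwo hC2
    simp only [map_mul, map_pow, hχπ, zero_mul] at hχC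
    generalize toZModTwo C = c at hχC
    revert c
    decide
  obtain ⟨C', rfl⟩ := toZModTwo_eq_zero_iff.mp hC
  exact ⟨A', B', C', rfl, mul_left_cancel₀ hπ (by linear_combination hC2)⟩

theorem eq_zero_of_sq_sub_mul_add_sq_eq {A B C : GaussianInt}
    (h : A ^ 2 - A * B + B ^ 2 = ⟨1, 1⟩ * C ^ 2) : C = 0 := by
  induction hn : C.norm.natAbs using Nat.strong_induction_on generalizing A B C with
  | _ n ih =>
  obtain ⟨A', B', C', rfl, h'⟩ := exists_of_sq_sub_mul_add_sq_eq h
  obtain rfl | hC' := eq_or_ne C' 0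
  · exact mul_zero _
  have hlt : C'.norm.natAbs < n := by
    have hpos : 0 < C'.norm.natAbs := Int.natAbs_pos.mpr (norm_eq_zero.not.mpr hC')
    have h2 : (Zsqrtd.norm (⟨1, 1⟩ : GaussianInt)).natAbs = 2 := by decide
    rw [← hn, Zsqrtd.norm_mul, Int.natAbs_mul, h2]
    omega
  rw [ih _ hlt h' rfl, mul_zero]

end GaussianInt

open Polynomial

theorem minpoly.natDegree_le_natDegree {K E : Type*} [Field K] [Ring E] [Algebra K E] {x : E}
    {p : K[X]} (hp : p.Monic) (hx : Polynomial.aeval x p = 0) :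
    (minpoly K x).natDegree ≤ p.natDegree :=
  Polynomial.natDegree_le_natDegree (minpoly.min K x hp hx)

namespace IntermediateField

variable {K E : Type*} [Field K] [Field E] [Algebra K E] {α : E}

theorem exists_eq_add_mul_gen (hα : IsIntegral K α) (hdeg : (minpoly K α).natDegree ≤ 2)
    (x : K⟮α⟯) :
    ∃ a b : K, x = algebraMap K K⟮α⟯ a + algebraMap K K⟮α⟯ b * AdjoinSimple.gen K α := by
  obtain ⟨f, hf, rfl⟩ := (adjoin.powerBasis hα).exists_eq_aeval x
  rw [adjoin.powerBasis_dim] at hf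
  refine ⟨f.coeff 0, f.coeff 1, ?_⟩
  conv_lhs => rw [eq_X_add_C_of_natDegree_le_one (by omega : f.natDegree ≤ 1)]
  rw [map_add, map_mul, aeval_C, aeval_C, aeval_X, adjoin.powerBasis_gen, add_comm]

theorem finrank_adjoin_simple_eq_two {p : K[X]} (hp : p.Monic) (hdeg : p.natDegree = 2)
    (hα : aeval α p = 0) (hαK : α ∉ Set.range (algebraMap K E)) :
    Module.finrank K K⟮α⟯ = 2 := by
  have hint : IsIntegral K α := ⟨p, hp, hα⟩
  rw [adjoin.finrank hint]
  exact (hdeg ▸ minpoly.natDegree_le_natDegree hp hα).antisymm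
    ((minpoly.two_le_natDegree_iff hint).2 hαK)

end IntermediateField

open Complex

theorem exists_rat_eq_add_mul_I_of_mem_QI {z : ℂ} (hz : z ∈ QI) :
    ∃ p q : ℚ, z = p + q * I := by
  have hI : aeval I (X ^ 2 + 1 : ℚ[X]) = 0 := by simp
  have hmon : (X ^ 2 + 1 : ℚ[X]).Monic := by monicity!
  have hdeg : (X ^ 2 + 1 : ℚ[X]).natDegree = 2 := by compute_degree!
  obtain ⟨p, q, hpq⟩ := exists_eq_add_mul_gen ⟨_, hmon, hI⟩
    (hdeg ▸ minpoly.natDegree_le_natDegree hmon hI) ⟨z, hz⟩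
  exact ⟨p, q, by simpa using congrArg Subtype.val hpq⟩

theorem exists_natCast_mul_eq_toComplex_of_mem_QI {z : ℂ} (hz : z ∈ QI) :
    ∃ n : ℕ, n ≠ 0 ∧ ∃ g : GaussianInt, (n : ℂ) * z = g := by
  obtain ⟨p, q, rfl⟩ := exists_rat_eq_add_mul_I_of_mem_QI hz
  refine ⟨p.den * q.den, by positivity, ⟨p.num * q.den, q.num * p.den⟩, ?_⟩
  rw [GaussianInt.toComplex_def']
  have hp : ((p.num : ℚ) : ℂ) = p * p.den := by exact_mod_cast p.mul_den_eq_num.symm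
  have hq : ((q.num : ℚ) : ℂ) = q * q.den := by exact_mod_cast q.mul_den_eq_num.symm
  push_cast at hp hq ⊢
  rw [hp, hq]
  ring

theorem sq_sub_mul_add_sq_ne_one_add_I {a b : ℂ} (ha : a ∈ QI) (hb : b ∈ QI) :
    a ^ 2 - a * b + b ^ 2 ≠ 1 + I := by
  intro h
  obtain ⟨m, hm, A, hA⟩ := exists_natCast_mul_eq_toComplex_of_mem_QI ha
  obtain ⟨n, hn, B, hB⟩ := exists_natCast_mul_eq_toComplex_of_mem_QI hb
  have hZi : (n * A) ^ 2 - (n * A) * (m * B) + (m * B) ^ 2 =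
      ⟨1, 1⟩ * ((m * n : ℕ) : GaussianInt) ^ 2 := by
    apply GaussianInt.toComplex_injective
    simp only [map_add, map_sub, map_mul, map_pow, map_natCast, ← hA, ← hB,
      GaussianInt.toComplex_def']
    push_cast
    linear_combination ((m : ℂ) * n) ^ 2 * h
  exact mul_ne_zero hm hn (by exact_mod_cast GaussianInt.eq_zero_of_sq_sub_mul_add_sq_eq hZi)

theorem sq_add_add_one_ne_zero_of_mem_QI {ω : ℂ} (hω : ω ∈ QI) : ω ^ 2 + ω + 1 ≠ 0 := by
  intro h
  have hI : I ∈ QI := IntermediateField.mem_adjoin_simple_self ℚ I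
  have hδ : 2 * ω + 1 ≠ 0 := fun h0 ↦ by
    have : (2 * ω + 1) ^ 2 = -3 := by linear_combination 4 * h
    norm_num [h0] at this
  -- `a² - ab + b² = (a + bω)(a + bω²)` over `ℚ(i)`; take `a + bω = 1 + i` and `a + bω² = 1`.
  set b := I / (2 * ω + 1)
  have hb : b ∈ QI := div_mem hI (by aesop)
  refine sq_sub_mul_add_sq_ne_one_add_I (a := 1 + I - b * ω) (b := b) (by aesop) hb ?_
  have hbδ : b * (2 * ω + 1) = I := div_mul_cancel₀ _ hδ
  linear_combination (-(1 + I)) * hbδ + b ^ 2 * h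

theorem isNonNormElement_of_forall_norm_ne_s9 {E F : Type*} [Field E] [Field F] [Algebra E F]
    [FiniteDimensional E F] (hp : (Module.finrank E F).Prime) {γ : E}
    (hγ : ∀ x : F, Algebra.norm E x ≠ γ) : IsNonNormElement E F γ := by
  have hγ0 : γ ≠ 0 := fun h ↦ hγ 0 (by rw [Algebra.norm_zero, h])
  have := Fact.mk hp
  refine ⟨hγ0, orderOf_eq_prime ?_ ?_⟩
  · rw [← QuotientGroup.mk_pow, QuotientGroup.eq_one_iff]
    refine ⟨Units.mk0 (algebraMap E F γ) (by simpa using hγ0), Units.ext ?_⟩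
    simp [Algebra.norm_algebraMap]
  · rw [Ne, QuotientGroup.eq_one_iff]
    rintro ⟨y, hy⟩
    exact hγ y (congrArg Units.val hy)

namespace Algebra

variable {F K : Type*} [Field F] [Field K] [Algebra F K] [IsQuadraticExtension F K] [IsGalois F K]

theorem algebraMap_norm_eq_mul_of_ne_one {σ : Gal(K/F)} (hσ : σ ≠ 1) (x : K) :
    algebraMap F K (norm F x) = x * σ x := by
  classical
  have hcard : Fintype.card Gal(K/F) = 2 := by
    rw [← Nat.card_eq_fintype_card, IsGalois.card_aut_eq_finrank,
      IsQuadraticExtension.finrank_eq_two]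
  have huniv : (Finset.univ : Finset Gal(K/F)) = {1, σ} :=
    (Finset.eq_of_subset_of_card_le (Finset.subset_univ _)
      (by rw [Finset.card_pair hσ.symm, Finset.card_univ, hcard])).symm
  rw [norm_eq_prod_automorphisms, huniv, Finset.prod_pair hσ.symm]
  rfl

theorem norm_add_mul_of_sq_add_add_one_eq_zero {ω : K} (hω : ω ^ 2 + ω + 1 = 0)
    (hωF : ω ∉ Set.range (algebraMap F K)) (a b : F) :
    norm F (algebraMap F K a + algebraMap F K b * ω) = a ^ 2 - a * b + b ^ 2 := by
  obtain ⟨σ, hσ⟩ : ∃ σ : Gal(K/F), σ ω ≠ ω := by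
    by_contra! h
    exact hωF ((IsGalois.mem_range_algebraMap_iff_fixed ω).2 h)
  have hσω : σ ω = -1 - ω := by
    have hσω' : σ ω ^ 2 + σ ω + 1 = 0 := by simpa using congrArg σ hω
    have : (σ ω - ω) * (σ ω - (-1 - ω)) = 0 := by linear_combination hσω' - hω
    exact sub_eq_zero.mp ((mul_eq_zero.mp this).resolve_left (sub_ne_zero.mpr hσ))
  apply FaithfulSMul.algebraMap_injective F K
  rw [algebraMap_norm_eq_mul_of_ne_one (σ := σ) (by rintro rfl; exact hσ rfl)]
  simp only [map_add, map_mul, map_sub, map_pow, AlgEquiv.commutes, hσω]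
  linear_combination (-(algebraMap F K b) ^ 2) * hω

end Algebra

theorem statement9 (ζ : ℂ) (hζ : IsPrimitiveRoot ζ 3)
    (L : IntermediateField ↥QI ℂ) (hL : L = IntermediateField.adjoin ↥QI {ζ}) :
    IsGalois ↥QI ↥L ∧ IsCyclic (↥L ≃ₐ[↥QI] ↥L) ∧ Module.finrank ↥QI ↥L = 2 ∧
      IsNonNormElement ↥QI ↥L onePlusI := by
  subst hL
  have hζ2 : ζ ^ 2 + ζ + 1 = 0 := by
    have := hζ.geom_sum_eq_zero (by norm_num)
    simp only [Finset.sum_range_succ, Finset.sum_range_zero] at this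
    linear_combination this
  have hmon : (X ^ 2 + X + 1 : QI[X]).Monic := by monicity!
  have hdeg : (X ^ 2 + X + 1 : QI[X]).natDegree = 2 := by compute_degree!
  have hroot : aeval ζ (X ^ 2 + X + 1 : QI[X]) = 0 := by simpa using hζ2
  have hζQI : ζ ∉ Set.range (algebraMap QI ℂ) := by
    rintro ⟨c, rfl⟩
    exact sq_add_add_one_ne_zero_of_mem_QI c.2 hζ2
  have hrank := finrank_adjoin_simple_eq_two hmon hdeg hroot hζQI
  have : Algebra.IsQuadraticExtension QI QI⟮ζ⟯ := ⟨hrank⟩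
  refine ⟨inferInstance, inferInstance, hrank, isNonNormElement_of_forall_norm_ne_s9
    (hrank ▸ Nat.prime_two) fun x hx ↦ ?_⟩
  obtain ⟨a, b, rfl⟩ := exists_eq_add_mul_gen ⟨_, hmon, hroot⟩
    (hdeg ▸ minpoly.natDegree_le_natDegree hmon hroot) x
  have hgen : AdjoinSimple.gen QI ζ ^ 2 + AdjoinSimple.gen QI ζ + 1 = 0 := Subtype.ext hζ2
  have hgenQI : AdjoinSimple.gen QI ζ ∉ Set.range (algebraMap QI QI⟮ζ⟯) :=
    fun ⟨c, hc⟩ ↦ hζQI ⟨c, congrArg Subtype.val hc⟩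
  rw [Algebra.norm_add_mul_of_sq_add_add_one_eq_zero hgen hgenQI] at hx
  exact sq_sub_mul_add_sq_ne_one_add_I a.2 b.2 (by simpa [onePlusI] using congrArg Subtype.val hx)
end
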